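/- Under Assumptions IV and strong monotonicity, τ_LATT = E[e(X)·π(X)·τ(X)] / E[e(X)·π(X)] and τ_LATU = E[(1−e(X))·π(X)·τ(X)] / E[(1−e(X))·π(X)], where e(X) = Pr[Z=1|X]. -/

import Mathlib

open Finset

section Defs

variable {Ω 𝓧 : Type*} [Fintype Ω]

/-- Expectation of `f` under weights `p` on a finite outcome space. -/
noncomputable def pexp (p : Ω → ℝ) (f : Ω → ℝ) : ℝ := ∑ ω, p ω * f ω

open Classical in
/-- Probability of the event `A` under weights `p`. -/
noncomputable def pprob (p : Ω → ℝ) (A : Ω → Prop) : ℝ := ∑ ω, if A ω then p ω else 0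

open Classical in
/-- Conditional expectation of `f` given the event `A`. -/
noncomputable def eexp (p : Ω → ℝ) (A : Ω → Prop) (f : Ω → ℝ) : ℝ :=
  (∑ ω, if A ω then p ω * f ω else 0) / pprob p A

/-- Conditional probability of `A` given `B`. -/
noncomputable def cprob (p : Ω → ℝ) (A B : Ω → Prop) : ℝ :=
  pprob p (fun ω => A ω ∧ B ω) / pprob p B

/-- `p` is a probability vector. -/
def IsProb (p : Ω → ℝ) : Prop := (∀ ω, 0 ≤ p ω) ∧ ∑ ω, p ω = 1

/-- Conditional expectation of `f` given `X = x`. -/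
noncomputable def condMean (p : Ω → ℝ) (X : Ω → 𝓧) (f : Ω → ℝ) (x : 𝓧) : ℝ :=
  eexp p (fun ω => X ω = x) f

/-- Conditional expectation of `f` given `X = x` and `Z = z`. -/
noncomputable def condMeanOn (p : Ω → ℝ) (X : Ω → 𝓧) (Z : Ω → ℝ) (f : Ω → ℝ) (x : 𝓧) (z : ℝ) : ℝ :=
  eexp p (fun ω => X ω = x ∧ Z ω = z) f

/-- Conditional cslope coefficient `E[f | Z=1, X=x] - E[f | Z=0, X=x]`. -/
noncomputable def cslope (p : Ω → ℝ) (X : Ω → 𝓧) (Z : Ω → ℝ) (f : Ω → ℝ) (x : 𝓧) : ℝ :=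
  condMeanOn p X Z f x 1 - condMeanOn p X Z f x 0

/-- Conditional variance of `f` given the event `A`. -/
noncomputable def evVar (p : Ω → ℝ) (A : Ω → Prop) (f : Ω → ℝ) : ℝ :=
  eexp p A (fun ω => (f ω - eexp p A f) ^ 2)

/-- Conditional variance of `f` given `X = x`. -/
noncomputable def condVar (p : Ω → ℝ) (X : Ω → 𝓧) (f : Ω → ℝ) (x : 𝓧) : ℝ :=
  evVar p (fun ω => X ω = x) f

end Defs

/-! For a complier, strong monotonicity and binary potential treatments force `D0 = 0`, `D1 = 1`,
hence `D = Z`: up to a null set the treated (untreated) compliers are the compliers with `Z = 1`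
(`Z = 0`). By the tower property and the conditional independence of `Z` from
`W = (Y0, Y1, D0, D1)` given `X`, `E[1{Z = z} F(W)] = E[Pr[Z = z | X] · E[F(W) | X]]`.
Taking `F(W) = 1{D1 ≠ D0} (Y1 - Y0)` gives the numerator `E[e π τ]`, taking `F(W) = 1{D1 ≠ D0}`
the denominator `E[e π]`; for the untreated, `1 - e = Pr[Z = 0 | X]` on the support. -/

section WeightedSums

variable {Ω α β : Type*} [Fintype Ω] {p : Ω → ℝ}

theorem pexp_congr {f g : Ω → ℝ} (h : ∀ ω, p ω ≠ 0 → f ω = g ω) : pexp p f = pexp p g :=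
  Finset.sum_congr rfl fun ω _ => by
    by_cases hω : p ω = 0
    · simp [hω]
    · rw [h ω hω]

theorem pprob_eq_pexp (A : Ω → Prop) [DecidablePred A] :
    pprob p A = pexp p (fun ω => if A ω then 1 else 0) :=
  Finset.sum_congr rfl fun ω _ => by by_cases h : A ω <;> simp [h]

theorem eexp_eq_div (A : Ω → Prop) [DecidablePred A] (f : Ω → ℝ) :
    eexp p A f = pexp p (fun ω => if A ω then f ω else 0) / pprob p A := by
  unfold eexp pexp
  congr 1
  exact Finset.sum_congr rfl fun ω _ => by by_cases h : A ω <;> simp [h]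

theorem pprob_congr {A B : Ω → Prop} (h : ∀ ω, p ω ≠ 0 → (A ω ↔ B ω)) :
    pprob p A = pprob p B := by
  classical
  simp only [pprob_eq_pexp]
  exact pexp_congr fun ω hω => by simp only [h ω hω]

theorem pprob_and_add_pprob_not_and (A B : Ω → Prop) :
    pprob p (fun ω => A ω ∧ B ω) + pprob p (fun ω => ¬A ω ∧ B ω) = pprob p B := by
  unfold pprob
  rw [← Finset.sum_add_distrib]
  exact Finset.sum_congr rfl fun ω _ => by by_cases A ω <;> by_cases B ω <;> simp_all

theorem cprob_not {A B : Ω → Prop} (hB : pprob p B ≠ 0) :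
    cprob p (fun ω => ¬A ω) B = 1 - cprob p A B := by
  unfold cprob
  rw [eq_sub_iff_add_eq, ← add_div, add_comm, pprob_and_add_pprob_not_and, div_self hB]

theorem pexp_ite_eq_zero (hp0 : ∀ ω, 0 ≤ p ω) {A : Ω → Prop} [DecidablePred A]
    (hA : pprob p A = 0) (f : Ω → ℝ) : pexp p (fun ω => if A ω then f ω else 0) = 0 := by
  have hzero : ∀ ω, A ω → p ω = 0 := by
    rw [pprob_eq_pexp, pexp, Finset.sum_eq_zero_iff_of_nonneg] at hA
    · intro ω hω
      simpa [hω] using hA ω (Finset.mem_univ ω)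
    · intro ω _
      split_ifs <;> simp [hp0 ω]
  exact Finset.sum_eq_zero fun ω _ => by by_cases hω : A ω <;> simp [hzero ω, hω]

theorem pprob_fiber_ne_zero (hp0 : ∀ ω, 0 ≤ p ω) (X : Ω → α) {ω : Ω} (hω : p ω ≠ 0) :
    pprob p (fun v => X v = X ω) ≠ 0 := by
  classical
  have hle : p ω ≤ pprob p (fun v => X v = X ω) := by
    calc p ω = if X ω = X ω then p ω else 0 := (if_pos rfl).symm
      _ ≤ pprob p (fun v => X v = X ω) :=
        Finset.single_le_sum (f := fun v => if X v = X ω then p v else 0)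
          (fun v _ => by split_ifs <;> simp [hp0 v]) (Finset.mem_univ ω)
  exact (lt_of_lt_of_le ((hp0 ω).lt_of_ne' hω) hle).ne'

theorem pexp_eq_sum_fiber [DecidableEq α] (X : Ω → α) (f : Ω → ℝ) :
    pexp p f = ∑ x ∈ Finset.univ.image X, pexp p (fun ω => if X ω = x then f ω else 0) := by
  unfold pexp
  rw [Finset.sum_comm]
  refine Finset.sum_congr rfl fun ω _ => ?_
  simp [mul_ite, Finset.sum_ite_eq]

theorem pexp_ite_comp [DecidableEq β] (A : Ω → Prop) [DecidablePred A] (W : Ω → β)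
    (F : β → ℝ) :
    pexp p (fun ω => if A ω then F (W ω) else 0)
      = ∑ w ∈ Finset.univ.image W, F w * pprob p (fun ω => A ω ∧ W ω = w) := by
  rw [pexp_eq_sum_fiber W]
  refine Finset.sum_congr rfl fun w _ => ?_
  classical
  rw [pprob_eq_pexp, pexp, pexp, Finset.mul_sum]
  exact Finset.sum_congr rfl fun ω _ => by split_ifs <;> simp_all [mul_comm]

theorem pexp_condMean (hp0 : ∀ ω, 0 ≤ p ω) (X : Ω → α) (f : Ω → ℝ) :
    pexp p (fun ω => condMean p X f (X ω)) = pexp p f := by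
  classical
  rw [pexp_eq_sum_fiber X, pexp_eq_sum_fiber X f]
  refine Finset.sum_congr rfl fun x _ => ?_
  have hfiber : pexp p (fun ω => if X ω = x then condMean p X f (X ω) else 0)
      = condMean p X f x * pprob p (fun ω => X ω = x) := by
    rw [pprob_eq_pexp, pexp, pexp, Finset.mul_sum]
    exact Finset.sum_congr rfl fun ω _ => by split_ifs with h <;> simp [h, mul_comm]
  rw [hfiber, condMean, eexp_eq_div]
  by_cases hx : pprob p (fun ω => X ω = x) = 0
  · rw [hx, mul_zero, pexp_ite_eq_zero hp0 hx]
  · exact div_mul_cancel₀ _ hx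

end WeightedSums

section CondIndep

variable {Ω α β γ : Type*} [Fintype Ω] {p : Ω → ℝ}

-- `W ⫫ Z ∣ X` under the weights `p`, with the denominators cleared.
def PCondIndep (p : Ω → ℝ) (W : Ω → β) (Z : Ω → γ) (X : Ω → α) : Prop :=
  ∀ x w z, pprob p (fun ω => X ω = x ∧ W ω = w ∧ Z ω = z) * pprob p (fun ω => X ω = x)
    = pprob p (fun ω => X ω = x ∧ W ω = w) * pprob p (fun ω => X ω = x ∧ Z ω = z)

theorem condMean_ite_eq_cprob_mul [DecidableEq γ] {W : Ω → β} {Z : Ω → γ} {X : Ω → α}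
    (hW : PCondIndep p W Z X) (F : β → ℝ) (z : γ) {x : α} (hx : pprob p (fun ω => X ω = x) ≠ 0) :
    condMean p X (fun ω => if Z ω = z then F (W ω) else 0) x
      = cprob p (fun ω => Z ω = z) (fun ω => X ω = x) * condMean p X (fun ω => F (W ω)) x := by
  classical
  have hmerge : pexp p (fun ω => if X ω = x then (if Z ω = z then F (W ω) else 0) else 0)
      = pexp p (fun ω => if X ω = x ∧ Z ω = z then F (W ω) else 0) := by
    simp only [ite_and]
  have hindep : ∀ w, pprob p (fun ω => (X ω = x ∧ Z ω = z) ∧ W ω = w)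
      = pprob p (fun ω => X ω = x ∧ W ω = w) * pprob p (fun ω => X ω = x ∧ Z ω = z)
        / pprob p (fun ω => X ω = x) := by
    intro w
    rw [eq_div_iff hx, ← hW x w z]
    congr 1
    exact pprob_congr fun ω _ => by tauto
  have hZX : pprob p (fun ω => Z ω = z ∧ X ω = x) = pprob p (fun ω => X ω = x ∧ Z ω = z) :=
    pprob_congr fun ω _ => and_comm
  unfold condMean cprob
  rw [eexp_eq_div, eexp_eq_div, hmerge, pexp_ite_comp, pexp_ite_comp, hZX]
  simp only [hindep, mul_div_assoc', Finset.sum_div, Finset.mul_sum]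
  field_simp
  refine Finset.sum_congr rfl fun w _ => ?_
  ring

theorem pexp_ite_eq_pexp_cprob_mul_condMean [DecidableEq γ] (hp0 : ∀ ω, 0 ≤ p ω)
    {W : Ω → β} {Z : Ω → γ} {X : Ω → α} (hW : PCondIndep p W Z X) (F : β → ℝ) (z : γ) :
    pexp p (fun ω => if Z ω = z then F (W ω) else 0)
      = pexp p (fun ω => cprob p (fun v => Z v = z) (fun v => X v = X ω)
          * condMean p X (fun v => F (W v)) (X ω)) := by
  rw [← pexp_condMean hp0 X]
  exact pexp_congr fun ω hω => condMean_ite_eq_cprob_mul hW F z (pprob_fiber_ne_zero hp0 X hω)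

end CondIndep

theorem eq_of_complier {Ω : Type*} {Z D0 D1 D : Ω → ℝ} {ω : Ω} (hZ : Z ω = 0 ∨ Z ω = 1)
    (hD0 : D0 ω = 0 ∨ D0 ω = 1) (hD1 : D1 ω = 0 ∨ D1 ω = 1)
    (hD : D ω = if Z ω = 1 then D1 ω else D0 ω) (hmono : D0 ω ≤ D1 ω) (hc : D1 ω ≠ D0 ω) : D ω = Z ω := by
  have hD01 : D0 ω = 0 ∧ D1 ω = 1 := by
    rcases hD0 with h0 | h0 <;> rcases hD1 with h1 | h1 <;> simp_all; norm_num at hmono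
  rcases hZ with hz | hz <;> simp [hD, hz, hD01]

section LATE

variable {Ω 𝓧 : Type*} [Fintype Ω] {p : Ω → ℝ} {X : Ω → 𝓧} {Z D0 D1 Y0 Y1 D : Ω → ℝ}

theorem pCondIndep_potentialOutcomes
    (hindep : ∀ (x : 𝓧) (y0 y1 d0 d1 z : ℝ),
      pprob p (fun ω => X ω = x ∧ Y0 ω = y0 ∧ Y1 ω = y1 ∧ D0 ω = d0 ∧ D1 ω = d1 ∧ Z ω = z) *
          pprob p (fun ω => X ω = x)
        = pprob p (fun ω => X ω = x ∧ Y0 ω = y0 ∧ Y1 ω = y1 ∧ D0 ω = d0 ∧ D1 ω = d1) *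
            pprob p (fun ω => X ω = x ∧ Z ω = z)) :
    PCondIndep p (fun ω => (Y0 ω, Y1 ω, D0 ω, D1 ω)) Z X := by
  rintro x ⟨y0, y1, d0, d1⟩ z
  simpa only [Prod.mk.injEq, and_assoc] using hindep x y0 y1 d0 d1 z

theorem condMean_ite_eq_cprob_mul_eexp (hp0 : ∀ ω, 0 ≤ p ω) (B : Ω → Prop) [DecidablePred B]
    (g : Ω → ℝ) (x : 𝓧) :
    condMean p X (fun ω => if B ω then g ω else 0) x
      = cprob p B (fun ω => X ω = x) * eexp p (fun ω => B ω ∧ X ω = x) g := by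
  classical
  have hmerge : pexp p (fun ω => if X ω = x then (if B ω then g ω else 0) else 0)
      = pexp p (fun ω => if B ω ∧ X ω = x then g ω else 0) := by
    congr 1
    ext ω
    by_cases hB : B ω <;> by_cases hX : X ω = x <;> simp [hB, hX]
  unfold condMean cprob
  rw [eexp_eq_div, eexp_eq_div, hmerge]
  by_cases hBx : pprob p (fun ω => B ω ∧ X ω = x) = 0
  · simp [pexp_ite_eq_zero hp0 hBx]
  · field_simp

theorem condMean_ite_one (B : Ω → Prop) [DecidablePred B] (x : 𝓧) :
    condMean p X (fun ω => if B ω then 1 else 0) x = cprob p B (fun ω => X ω = x) := by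
  classical
  unfold condMean cprob
  rw [eexp_eq_div, pprob_eq_pexp (fun ω => B ω ∧ X ω = x)]
  congr 2
  ext ω
  by_cases hB : B ω <;> by_cases hX : X ω = x <;> simp [hB, hX]

theorem cprob_lt_eq_cprob_ne (hp0 : ∀ ω, 0 ≤ p ω) (hmono : ∀ ω, 0 < p ω → D0 ω ≤ D1 ω)
    (B : Ω → Prop) :
    cprob p (fun ω => D0 ω < D1 ω) B = cprob p (fun ω => D1 ω ≠ D0 ω) B := by
  unfold cprob
  congr 1
  refine pprob_congr fun ω hω => ?_
  have hle := hmono ω ((hp0 ω).lt_of_ne' hω)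
  simp only [lt_iff_le_and_ne, hle, true_and, ne_comm]

theorem eexp_complier_eq_div (hp0 : ∀ ω, 0 ≤ p ω)
    (hW : PCondIndep p (fun ω => (Y0 ω, Y1 ω, D0 ω, D1 ω)) Z X)
    (hZ : ∀ ω, Z ω = 0 ∨ Z ω = 1)
    (hD0 : ∀ ω, D0 ω = 0 ∨ D0 ω = 1) (hD1 : ∀ ω, D1 ω = 0 ∨ D1 ω = 1)
    (hmono : ∀ ω, 0 < p ω → D0 ω ≤ D1 ω)
    (hD : ∀ ω, D ω = if Z ω = 1 then D1 ω else D0 ω) (z : ℝ) :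
    eexp p (fun ω => D1 ω ≠ D0 ω ∧ D ω = z) (fun ω => Y1 ω - Y0 ω) =
      pexp p (fun ω =>
          cprob p (fun v => Z v = z) (fun v => X v = X ω) *
            cprob p (fun v => D0 v < D1 v) (fun v => X v = X ω) *
            eexp p (fun v => D1 v ≠ D0 v ∧ X v = X ω) (fun v => Y1 v - Y0 v)) /
        pexp p (fun ω =>
          cprob p (fun v => Z v = z) (fun v => X v = X ω) *
            cprob p (fun v => D0 v < D1 v) (fun v => X v = X ω)) := by
  have hDZ (g : Ω → ℝ) : pexp p (fun ω => if D1 ω ≠ D0 ω ∧ D ω = z then g ω else 0)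
      = pexp p (fun ω => if Z ω = z then (if D1 ω ≠ D0 ω then g ω else 0) else 0) := by
    refine pexp_congr fun ω hω => ?_
    by_cases hc : D1 ω ≠ D0 ω
    · rw [eq_of_complier (hZ ω) (hD0 ω) (hD1 ω) (hD ω) (hmono ω ((hp0 ω).lt_of_ne' hω)) hc]
      simp [hc]
    · simp [hc]
  rw [eexp_eq_div, pprob_eq_pexp, hDZ, hDZ,
    pexp_ite_eq_pexp_cprob_mul_condMean hp0 hW
      (fun w => if w.2.2.2 ≠ w.2.2.1 then w.2.1 - w.1 else 0),
    pexp_ite_eq_pexp_cprob_mul_condMean hp0 hW (fun w => if w.2.2.2 ≠ w.2.2.1 then 1 else 0)]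
  -- first, as the general form would also match `g = 1` and leave `eexp _ _ 1` behind
  simp only [condMean_ite_one]
  simp only [condMean_ite_eq_cprob_mul_eexp hp0, cprob_lt_eq_cprob_ne hp0 hmono, mul_assoc]

end LATE

theorem stmt13_general {Ω 𝓧 : Type*} [Fintype Ω] (p : Ω → ℝ) (hp : IsProb p)
    (X : Ω → 𝓧) (Z D0 D1 Y0 Y1 : Ω → ℝ)
    (hZ : ∀ ω, Z ω = 0 ∨ Z ω = 1)
    (hD0 : ∀ ω, D0 ω = 0 ∨ D0 ω = 1) (hD1 : ∀ ω, D1 ω = 0 ∨ D1 ω = 1)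
    -- conditional independence: (Y0, Y1, D0, D1) ⫫ Z | X
    (hindep : ∀ (x : 𝓧) (y0 y1 d0 d1 z : ℝ),
      pprob p (fun ω => X ω = x ∧ Y0 ω = y0 ∧ Y1 ω = y1 ∧ D0 ω = d0 ∧ D1 ω = d1 ∧ Z ω = z) *
          pprob p (fun ω => X ω = x)
        = pprob p (fun ω => X ω = x ∧ Y0 ω = y0 ∧ Y1 ω = y1 ∧ D0 ω = d0 ∧ D1 ω = d1) *
            pprob p (fun ω => X ω = x ∧ Z ω = z))
    -- strong monotonicity
    (hmono : ∀ ω, 0 < p ω → D0 ω ≤ D1 ω)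
    -- observed treatment and outcome (exclusion restriction built in)
    (D : Ω → ℝ)
    (hD : ∀ ω, D ω = if Z ω = 1 then D1 ω else D0 ω)
    :
    eexp p (fun ω => D1 ω ≠ D0 ω ∧ D ω = 1) (fun ω => Y1 ω - Y0 ω) =
      pexp p (fun ω =>
          cprob p (fun v => Z v = 1) (fun v => X v = X ω) *
            cprob p (fun v => D0 v < D1 v) (fun v => X v = X ω) *
            eexp p (fun v => D1 v ≠ D0 v ∧ X v = X ω) (fun v => Y1 v - Y0 v)) /
        pexp p (fun ω =>
          cprob p (fun v => Z v = 1) (fun v => X v = X ω) *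
            cprob p (fun v => D0 v < D1 v) (fun v => X v = X ω)) ∧
    eexp p (fun ω => D1 ω ≠ D0 ω ∧ D ω = 0) (fun ω => Y1 ω - Y0 ω) =
      pexp p (fun ω =>
          (1 - cprob p (fun v => Z v = 1) (fun v => X v = X ω)) *
            cprob p (fun v => D0 v < D1 v) (fun v => X v = X ω) *
            eexp p (fun v => D1 v ≠ D0 v ∧ X v = X ω) (fun v => Y1 v - Y0 v)) /
        pexp p (fun ω =>
          (1 - cprob p (fun v => Z v = 1) (fun v => X v = X ω)) *
            cprob p (fun v => D0 v < D1 v) (fun v => X v = X ω)) := by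
  have hp0 := hp.1
  have hW := pCondIndep_potentialOutcomes hindep
  refine ⟨eexp_complier_eq_div hp0 hW hZ hD0 hD1 hmono hD 1, ?_⟩
  have hZ0 : (fun ω => Z ω = 0) = fun ω => ¬Z ω = 1 :=
    funext fun ω => propext ⟨fun h => by simp [h], (hZ ω).resolve_right⟩
  have he0 : ∀ ω, p ω ≠ 0 → 1 - cprob p (fun v => Z v = 1) (fun v => X v = X ω)
      = cprob p (fun v => Z v = 0) (fun v => X v = X ω) := fun ω hω => by
    rw [hZ0, cprob_not (pprob_fiber_ne_zero hp0 X hω)]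
  rw [eexp_complier_eq_div hp0 hW hZ hD0 hD1 hmono hD 0]
  congr 1 <;> exact pexp_congr fun ω hω => by rw [he0 ω hω]

/-- under Assumption IV and strong monotonicity,
`τ_LATT = E[e(X)·π(X)·τ(X)] / E[e(X)·π(X)]` and
`τ_LATU = E[(1-e(X))·π(X)·τ(X)] / E[(1-e(X))·π(X)]`, where `e(x) = Pr[Z=1|X=x]`,
`π(x) = Pr[D(1)>D(0)|X=x]`, and `τ(x)` is the conditional LATE. -/
theorem stmt13 {Ω 𝓧 : Type*} [Fintype Ω] (p : Ω → ℝ) (hp : IsProb p)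
    (X : Ω → 𝓧) (Z D0 D1 Y0 Y1 : Ω → ℝ)
    (hZ : ∀ ω, Z ω = 0 ∨ Z ω = 1)
    (hD0 : ∀ ω, D0 ω = 0 ∨ D0 ω = 1) (hD1 : ∀ ω, D1 ω = 0 ∨ D1 ω = 1)
    -- conditional independence: (Y0, Y1, D0, D1) ⫫ Z | X
    (hindep : ∀ (x : 𝓧) (y0 y1 d0 d1 z : ℝ),
      pprob p (fun ω => X ω = x ∧ Y0 ω = y0 ∧ Y1 ω = y1 ∧ D0 ω = d0 ∧ D1 ω = d1 ∧ Z ω = z) *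
          pprob p (fun ω => X ω = x)
        = pprob p (fun ω => X ω = x ∧ Y0 ω = y0 ∧ Y1 ω = y1 ∧ D0 ω = d0 ∧ D1 ω = d1) *
            pprob p (fun ω => X ω = x ∧ Z ω = z))
    -- relevance
    (hrel : ∀ x : 𝓧, 0 < pprob p (fun ω => X ω = x) →
      0 < cprob p (fun ω => Z ω = 1) (fun ω => X ω = x) ∧
      cprob p (fun ω => Z ω = 1) (fun ω => X ω = x) < 1 ∧
      0 < cprob p (fun ω => D1 ω ≠ D0 ω) (fun ω => X ω = x))
    -- strong monotonicity
    (hmono : ∀ ω, 0 < p ω → D0 ω ≤ D1 ω)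
    -- observed treatment and outcome (exclusion restriction built in)
    (D Y : Ω → ℝ)
    (hD : ∀ ω, D ω = if Z ω = 1 then D1 ω else D0 ω)
    (hY : ∀ ω, Y ω = if D ω = 1 then Y1 ω else Y0 ω)
    :
    eexp p (fun ω => D1 ω ≠ D0 ω ∧ D ω = 1) (fun ω => Y1 ω - Y0 ω) =
      pexp p (fun ω =>
          cprob p (fun v => Z v = 1) (fun v => X v = X ω) *
            cprob p (fun v => D0 v < D1 v) (fun v => X v = X ω) *
            eexp p (fun v => D1 v ≠ D0 v ∧ X v = X ω) (fun v => Y1 v - Y0 v)) /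
        pexp p (fun ω =>
          cprob p (fun v => Z v = 1) (fun v => X v = X ω) *
            cprob p (fun v => D0 v < D1 v) (fun v => X v = X ω)) ∧
    eexp p (fun ω => D1 ω ≠ D0 ω ∧ D ω = 0) (fun ω => Y1 ω - Y0 ω) =
      pexp p (fun ω =>
          (1 - cprob p (fun v => Z v = 1) (fun v => X v = X ω)) *
            cprob p (fun v => D0 v < D1 v) (fun v => X v = X ω) *
            eexp p (fun v => D1 v ≠ D0 v ∧ X v = X ω) (fun v => Y1 v - Y0 v)) /
        pexp p (fun ω =>
          (1 - cprob p (fun v => Z v = 1) (fun v => X v = X ω)) *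
            cprob p (fun v => D0 v < D1 v) (fun v => X v = X ω)) :=
  stmt13_general p hp X Z D0 D1 Y0 Y1 hZ hD0 hD1 hindep hmono D hD
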